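/- arXiv:2402.15918 — 9 statements merged into one kernel-verified Lean document; each statement's English description precedes it below -/
import Mathlib

section
/- Let G be a finite Cpo-group and let H be a subgroup of G whose center is non-trivial (i.e., Z(H) ≠ 1). Then the order of H is a prime number. -/
/-- A group `G` is a Cpo-group if the centralizer of every non-trivial element
has prime order. -/
def IsCpoGroup (G : Type*) [Group G] : Prop :=
  ∀ x : G, x ≠ 1 → (Nat.card (Subgroup.centralizer ({x} : Set G))).Prime

theorem stmt_2 (G : Type*) [Group G] [Finite G] (hG : IsCpoGroup G)
    (H : Subgroup G) (hH : Subgroup.center H ≠ ⊥) :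
    (Nat.card H).Prime := by
  obtain ⟨x, hx, hx1⟩ := (Subgroup.bot_or_exists_ne_one (Subgroup.center H)).resolve_left hH
  have hxG : (x : G) ≠ 1 := fun h => hx1 (Subtype.ext h)
  have hp := hG (x : G) hxG
  have hle : H ≤ Subgroup.centralizer ({(x : G)} : Set G) := by
    intro h hh
    rw [Subgroup.mem_centralizer_singleton_iff]
    have := (Subgroup.mem_center_iff.mp hx) ⟨h, hh⟩
    exact congrArg Subtype.val this
  have hdvd : Nat.card H ∣ Nat.card (Subgroup.centralizer ({(x : G)} : Set G)) :=
    Subgroup.card_dvd_of_le hle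
  rcases (Nat.Prime.eq_one_or_self_of_dvd hp _ hdvd) with h1 | h2
  · exfalso
    have hb := Subgroup.eq_bot_of_card_eq H h1
    have hm : (x : G) ∈ H := x.2
    exact hxG (Subgroup.mem_bot.mp (hb ▸ hm))
  · rw [h2]; exact hp
end

section
/- Let G be a finite non-trivial Cpo-group. Then for every prime p dividing |G|, a Sylow p-subgroup of G has order exactly p; in particular, the order of G is squarefree (a product of distinct primes). -/
theorem stmt_3 (G : Type*) [Group G] [Finite G] (hG : IsCpoGroup G)
    (hnt : Nat.card G ≠ 1) :
    (∀ p : ℕ, p.Prime → p ∣ Nat.card G → ∀ P : Sylow p G, Nat.card P = p) ∧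
      Squarefree (Nat.card G) := by
  have key : ∀ p : ℕ, p.Prime → p ∣ Nat.card G → ∀ P : Sylow p G, Nat.card P = p := by
    intro p hp hdvd P
    haveI : Fact p.Prime := ⟨hp⟩
    -- P is nontrivial
    have hcard : Nat.card P = p ^ (Nat.card G).factorization p := P.card_eq_multiplicity
    have hfac : 1 ≤ (Nat.card G).factorization p := by
      exact Nat.Prime.factorization_pos_of_dvd hp (Nat.card_pos.ne') hdvd
    haveI : Nontrivial P := by
      rw [← Finite.one_lt_card_iff_nontrivial, hcard]
      calc 1 < p := hp.one_lt
        _ ≤ p ^ (Nat.card G).factorization p := Nat.le_self_pow (by omega) p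
    haveI := P.2.center_nontrivial
    obtain ⟨x, hx⟩ := exists_ne (1 : Subgroup.center (P : Subgroup G))
    set y : G := ((x : P) : G) with hy
    have hy1 : y ≠ 1 := by
      intro h
      apply hx
      ext
      exact h
    have hsub : (P : Subgroup G) ≤ Subgroup.centralizer ({y} : Set G) := by
      intro g hg
      rw [Subgroup.mem_centralizer_singleton_iff]
      have := (Subgroup.mem_center_iff.mp x.2) ⟨g, hg⟩
      exact congrArg Subtype.val this
    have hdvd2 : Nat.card P ∣ Nat.card (Subgroup.centralizer ({y} : Set G)) :=
      Subgroup.card_dvd_of_le hsub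
    have hq := hG y hy1
    -- card P divides prime, card P ≠ 1
    have hP1 : Nat.card P ≠ 1 := Finite.one_lt_card.ne'
    have hPeq : Nat.card P = Nat.card (Subgroup.centralizer ({y} : Set G)) :=
      ((Nat.Prime.eq_one_or_self_of_dvd hq _ hdvd2).resolve_left hP1)
    rw [hPeq]
    -- p divides it, so equals p
    have hpdvd : p ∣ Nat.card (Subgroup.centralizer ({y} : Set G)) := by
      rw [← hPeq, hcard]
      exact dvd_pow_self p (by omega)
    exact ((Nat.prime_dvd_prime_iff_eq hp hq).mp hpdvd).symm
  refine ⟨key, ?_⟩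
  rw [Nat.squarefree_iff_prime_squarefree]
  intro p hp hsq
  haveI : Fact p.Prime := ⟨hp⟩
  have hdvd : p ∣ Nat.card G := dvd_trans (dvd_mul_right p p) hsq
  obtain ⟨P⟩ : Nonempty (Sylow p G) := inferInstance
  have h1 := key p hp hdvd P
  have h2 : Nat.card P = p ^ (Nat.card G).factorization p := P.card_eq_multiplicity
  have hfac : 2 ≤ (Nat.card G).factorization p := by
    rw [← Nat.Prime.pow_dvd_iff_le_factorization hp Nat.card_pos.ne']
    simpa [sq] using hsq
  rw [h1] at h2
  have : p ^ 1 = p ^ (Nat.card G).factorization p := by simpa using h2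
  have := Nat.pow_right_injective hp.two_le this
  omega
end

section
/- Let G be a finite Cpo-group and let x be a non-trivial element of G. Then C_G(x) is a Sylow subgroup of G; that is, if p is the prime with |C_G(x)| = p, then C_G(x) is a Sylow p-subgroup of G. -/
theorem stmt_4 (G : Type*) [Group G] [Finite G] (hG : IsCpoGroup G)
    (x : G) (hx : x ≠ 1) (p : ℕ) (hp : p.Prime)
    (hcard : Nat.card (Subgroup.centralizer ({x} : Set G)) = p) :
    ∃ P : Sylow p G, (P : Subgroup G) = Subgroup.centralizer ({x} : Set G) := by
  haveI : Fact p.Prime := ⟨hp⟩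
  set C := Subgroup.centralizer ({x} : Set G) with hCdef
  have hCp : IsPGroup p C := IsPGroup.of_card (by rw [hcard, pow_one])
  obtain ⟨P, hP⟩ := hCp.exists_le_sylow
  have hxC : x ∈ C := Subgroup.mem_centralizer_iff.mpr (by simp)
  have hxP : x ∈ (P : Subgroup G) := hP hxC
  haveI : Nontrivial (P : Subgroup G) :=
    ⟨⟨⟨x, hxP⟩, 1, by simp [Subtype.ext_iff, hx]⟩⟩
  haveI := P.2.center_nontrivial
  obtain ⟨g, hg⟩ := exists_ne (1 : Subgroup.center (P : Subgroup G))
  set g₀ : G := ((g : (P : Subgroup G)) : G) with hg₀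
  have hg₀ne : g₀ ≠ 1 := by
    intro h
    apply hg
    ext
    exact h
  have hcomm : ∀ h ∈ (P : Subgroup G), h * g₀ = g₀ * h := by
    intro h hh
    have := (Subgroup.mem_center_iff.mp g.2) ⟨h, hh⟩
    exact congrArg Subtype.val this
  have hPle : (P : Subgroup G) ≤ Subgroup.centralizer ({g₀} : Set G) := by
    intro h hh
    exact Subgroup.mem_centralizer_iff.mpr (by
      intro m hm
      rw [Set.mem_singleton_iff] at hm
      rw [hm]
      exact (hcomm h hh).symm)
  have hq := hG g₀ hg₀ne
  have hPdvd : Nat.card (P : Subgroup G) ∣ Nat.card (Subgroup.centralizer ({g₀} : Set G)) :=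
    Subgroup.card_dvd_of_le hPle
  have hpdvdP : p ∣ Nat.card (P : Subgroup G) := by
    have h := Subgroup.card_dvd_of_le hP
    rwa [hcard] at h
  have hpq : p ∣ Nat.card (Subgroup.centralizer ({g₀} : Set G)) := hpdvdP.trans hPdvd
  have hpe : Nat.card (Subgroup.centralizer ({g₀} : Set G)) = p :=
    ((Nat.prime_dvd_prime_iff_eq hp hq).mp hpq).symm
  have hPcard : Nat.card (P : Subgroup G) = p :=
    Nat.dvd_antisymm (by rw [hpe] at hPdvd; exact hPdvd) hpdvdP
  have : C = (P : Subgroup G) :=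
    Subgroup.eq_of_le_of_card_ge hP (by rw [hcard, hPcard])
  exact ⟨P, this.symm⟩
end

section
/- Let G be a finite non-trivial Cpo-group. Then either |G| is a prime number, or G is non-nilpotent and exactly two distinct primes divide |G|. -/
open Subgroup
open scoped commutatorElement

theorem Subgroup.le_centralizer_of_disjoint_commutator {G : Type*} [Group G] {H : Subgroup G}
    (hH : Disjoint (_root_.commutator G) H) : H ≤ centralizer H := by
  intro b hb
  rw [mem_centralizer_iff]
  intro a ha
  have hba : ⁅b, a⁆ ∈ _root_.commutator G ⊓ H :=
    ⟨commutator_mem_commutator (mem_top b) (mem_top a),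
      H.mul_mem (H.mul_mem (H.mul_mem hb ha) (H.inv_mem hb)) (H.inv_mem ha)⟩
  rw [hH.eq_bot, mem_bot, commutatorElement_eq_one_iff_mul_comm] at hba
  exact hba.symm

namespace IsCpoGroup

variable {G : Type*} [Group G]

theorem card_prime_of_le_centralizer_singleton (hG : IsCpoGroup G) {x : G} (hx : x ≠ 1)
    {H : Subgroup G} (hH : H ≠ ⊥) (hle : H ≤ centralizer {x}) : (Nat.card H).Prime := by
  obtain h | h := (hG x hx).eq_one_or_self_of_dvd _ (card_dvd_of_le hle)
  · exact absurd (card_eq_one.mp h) hH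
  · exact h ▸ hG x hx

theorem card_prime_of_le_centralizer (hG : IsCpoGroup G) {H : Subgroup G} (hH : H ≠ ⊥)
    (hcomm : H ≤ centralizer H) : (Nat.card H).Prime := by
  obtain ⟨x, hxH, hx⟩ := H.bot_or_exists_ne_one.resolve_left hH
  exact hG.card_prime_of_le_centralizer_singleton hx hH
    (hcomm.trans (centralizer_le (Set.singleton_subset_iff.mpr hxH)))

theorem card_prime_of_commutator_eq_bot [Nontrivial G] (hG : IsCpoGroup G)
    (hG' : commutator G = ⊥) : (Nat.card G).Prime := by
  rw [commutator_def, commutator_eq_bot_iff_le_centralizer] at hG'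
  simpa using hG.card_prime_of_le_centralizer top_ne_bot hG'

theorem card_prime_of_isPGroup [Finite G] (hG : IsCpoGroup G) {p : ℕ} [Fact p.Prime]
    {H : Subgroup G} (hp : IsPGroup p H) (hH : H ≠ ⊥) : (Nat.card H).Prime := by
  have : Nontrivial H := H.nontrivial_iff_ne_bot.mpr hH
  have := hp.center_nontrivial
  obtain ⟨z, hz⟩ := exists_ne (1 : center H)
  refine hG.card_prime_of_le_centralizer_singleton (x := (z : H)) (by simpa using hz) hH ?_
  intro g hg
  rw [mem_centralizer_singleton_iff]
  exact congrArg Subtype.val (mem_center_iff.mp z.2 ⟨g, hg⟩)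

theorem isZGroup [Finite G] (hG : IsCpoGroup G) : IsZGroup G := by
  refine ⟨fun p hp P => ?_⟩
  have : Fact p.Prime := ⟨hp⟩
  obtain hP | hP := eq_or_ne (P : Subgroup G) ⊥
  · rw [hP]
    infer_instance
  · have := Fact.mk (hG.card_prime_of_isPGroup P.isPGroup' hP)
    exact isCyclic_of_prime_card rfl

theorem card_primeFactors_eq_two [Finite G] (hG : IsCpoGroup G) (hG' : commutator G ≠ ⊥) :
    (Nat.card G).primeFactors.card = 2 := by
  have := hG.isZGroup
  have := IsZGroup.isCyclic_commutator G
  have hr := hG.card_prime_of_le_centralizer hG'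
    (le_centralizer_iff_isMulCommutative.mpr inferInstance)
  obtain ⟨H, hNH⟩ := exists_right_complement'_of_coprime (IsZGroup.coprime_commutator_index G)
  have hH : H ≠ ⊥ := by
    rintro rfl
    obtain ⟨x, -, hx⟩ := (bot_or_exists_ne_one _).resolve_left hG'
    have : Nontrivial G := nontrivial_of_ne x 1 hx
    exact (IsZGroup.commutator_lt G).ne (isComplement'_bot_right.mp hNH)
  have hq := hG.card_prime_of_le_centralizer hH (le_centralizer_of_disjoint_commutator hNH.disjoint)
  have hrq : Nat.card (commutator G) ≠ Nat.card H :=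
    (Nat.coprime_primes hr hq).mp (hNH.symm.index_eq_card ▸ IsZGroup.coprime_commutator_index G)
  rw [← hNH.card_mul_card, Nat.primeFactors_mul hr.ne_zero hq.ne_zero, hr.primeFactors,
    hq.primeFactors]
  exact Finset.card_pair hrq

end IsCpoGroup

theorem stmt_7 (G : Type*) [Group G] [Finite G] (hG : IsCpoGroup G)
    (hnt : Nat.card G ≠ 1) :
    (Nat.card G).Prime ∨
      (¬ Group.IsNilpotent G ∧ (Nat.card G).primeFactors.card = 2) := by
  have : Nontrivial G :=
    Finite.one_lt_card_iff_nontrivial.mp (lt_of_le_of_ne Nat.card_pos hnt.symm)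
  by_cases hG' : commutator G = ⊥
  · exact Or.inl (hG.card_prime_of_commutator_eq_bot hG')
  · refine Or.inr ⟨fun _ => ?_, hG.card_primeFactors_eq_two hG'⟩
    have := hG.isZGroup
    exact hG' (commutator_eq_bot G)
end

section
/- Let G be a finite Cpo-group and let N be a non-trivial normal subgroup of G. Then the quotient group G/N is a Cpo-group (where for the degenerate case N = G the condition holds vacuously). -/
/-- In a Cpo-group every nontrivial element has prime order. -/
lemma cpo_orderOf_prime {G : Type*} [Group G] [Finite G] (hG : IsCpoGroup G)
    {y : G} (hy : y ≠ 1) : (orderOf y).Prime := by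
  have hq := hG y hy
  have hmem : y ∈ Subgroup.centralizer ({y} : Set G) :=
    Subgroup.mem_centralizer_singleton_iff.mpr rfl
  have hdvd : orderOf y ∣ Nat.card (Subgroup.centralizer ({y} : Set G)) := by
    have := orderOf_dvd_natCard (⟨y, hmem⟩ : Subgroup.centralizer ({y} : Set G))
    rwa [Subgroup.orderOf_mk] at this
  have h1 : orderOf y ≠ 1 := by simpa [orderOf_eq_one_iff] using hy
  rcases (Nat.Prime.eq_one_or_self_of_dvd hq _ hdvd) with h | h
  · exact absurd h h1
  · rwa [h]

/-- In a Cpo-group, every prime divides the order of the group at most once. -/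
lemma cpo_factorization_le_one {G : Type*} [Group G] [Finite G] (hG : IsCpoGroup G)
    {p : ℕ} (hp : p.Prime) (hpG : p ∣ Nat.card G) :
    (Nat.card G).factorization p ≤ 1 := by
  haveI : Fact p.Prime := ⟨hp⟩
  obtain ⟨P⟩ : Nonempty (Sylow p G) := inferInstance
  have hcard : Nat.card P = p ^ (Nat.card G).factorization p := P.card_eq_multiplicity
  have hv : 1 ≤ (Nat.card G).factorization p :=
    (Nat.Prime.factorization_pos_of_dvd hp Nat.card_pos.ne' hpG)
  -- P is a nontrivial p-group, so its center is nontrivial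
  haveI : Nontrivial P := by
    rw [← Finite.one_lt_card_iff_nontrivial, hcard]
    calc 1 < p ^ 1 := by simpa using hp.one_lt
    _ ≤ p ^ (Nat.card G).factorization p := Nat.pow_le_pow_right hp.pos hv
  haveI : Nontrivial (Subgroup.center (P : Subgroup G)) := P.isPGroup'.center_nontrivial
  obtain ⟨z, hz⟩ := exists_ne (1 : Subgroup.center (P : Subgroup G))
  set x : G := ((z : (P : Subgroup G)) : G) with hxdef
  have hx1 : x ≠ 1 := by
    intro h
    exact hz (Subtype.ext (Subtype.ext h))
  have hle : (P : Subgroup G) ≤ Subgroup.centralizer ({x} : Set G) := by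
    intro g hg
    rw [Subgroup.mem_centralizer_singleton_iff]
    have := (Subgroup.mem_center_iff.mp z.2) ⟨g, hg⟩
    exact congrArg Subtype.val this
  have hdvd : Nat.card (P : Subgroup G) ∣ Nat.card (Subgroup.centralizer ({x} : Set G)) :=
    Subgroup.card_dvd_of_le hle
  have hq := hG x hx1
  rw [hcard] at hdvd
  rcases Nat.Prime.eq_one_or_self_of_dvd hq _ hdvd with h | h
  · exfalso
    have h1 : 1 < p ^ (Nat.card G).factorization p := Nat.one_lt_pow (by omega) hp.one_lt
    omega
  · have := (Nat.Prime.pow_eq_iff hq).mp h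
    omega

theorem stmt_9 (G : Type*) [Group G] [Finite G] (hG : IsCpoGroup G)
    (N : Subgroup G) [N.Normal] (hN : N ≠ ⊥) :
    IsCpoGroup (G ⧸ N) := by
  -- every nontrivial element of G ⧸ N has prime order
  have hord : ∀ z : G ⧸ N, z ≠ 1 → (orderOf z).Prime := by
    intro z hz
    obtain ⟨y, rfl⟩ := QuotientGroup.mk_surjective z
    have hy : y ≠ 1 := by rintro rfl; exact hz rfl
    have hyp := cpo_orderOf_prime hG hy
    have hdvd : orderOf ((y : G ⧸ N)) ∣ orderOf y := orderOf_map_dvd (QuotientGroup.mk' N) y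
    have h1 : orderOf ((y : G ⧸ N)) ≠ 1 := by simpa [orderOf_eq_one_iff] using hz
    rcases Nat.Prime.eq_one_or_self_of_dvd hyp _ hdvd with h | h
    · exact absurd h h1
    · rwa [h]
  intro x hx
  set p := orderOf x with hpdef
  have hp : p.Prime := hord x hx
  haveI : Fact p.Prime := ⟨hp⟩
  set C := Subgroup.centralizer ({x} : Set (G ⧸ N)) with hCdef
  -- C is a p-group
  have hCp : IsPGroup p C := by
    intro g
    by_cases hg1 : (g : G ⧸ N) = 1
    · exact ⟨0, by ext; simpa using hg1⟩
    · have hgp : (orderOf (g : G ⧸ N)).Prime := hord _ hg1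
      by_cases hr : orderOf (g : G ⧸ N) = p
      · refine ⟨1, ?_⟩
        ext
        push_cast
        rw [pow_one, ← hr]
        exact pow_orderOf_eq_one _
      · exfalso
        have hcomm : Commute x (g : G ⧸ N) :=
          (Subgroup.mem_centralizer_singleton_iff.mp g.2).symm
        have hcop : Nat.Coprime p (orderOf (g : G ⧸ N)) :=
          (Nat.coprime_primes hp hgp).mpr (fun h => hr h.symm)
        have hmul : orderOf (x * (g : G ⧸ N)) = p * orderOf (g : G ⧸ N) :=
          hcomm.orderOf_mul_eq_mul_orderOf_of_coprime hcop
        have hne : x * (g : G ⧸ N) ≠ 1 := by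
          intro h
          rw [h, orderOf_one] at hmul
          exact Nat.Prime.one_lt hp |>.ne' <| by
            have := hgp.one_lt
            nlinarith
        have := hord _ hne
        rw [hmul] at this
        rcases Nat.prime_mul_iff.mp this with ⟨_, h⟩ | ⟨_, h⟩
        · exact hgp.one_lt.ne' h
        · exact hp.one_lt.ne' h
  obtain ⟨n, hn⟩ := IsPGroup.iff_card.mp hCp
  -- card C divides card G
  have hCG : Nat.card C ∣ Nat.card G :=
    (Subgroup.card_subgroup_dvd_card C).trans (Subgroup.card_quotient_dvd_card N)
  have hpG : p ∣ Nat.card G :=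
    (orderOf_dvd_natCard x).trans (Subgroup.card_quotient_dvd_card N)
  have hfac := cpo_factorization_le_one hG hp hpG
  have hn1 : n ≤ 1 := by
    have : p ^ n ∣ Nat.card G := hn ▸ hCG
    have := (Nat.Prime.pow_dvd_iff_le_factorization hp Nat.card_pos.ne').mp this
    omega
  -- card C ≠ 1 since x ∈ C is nontrivial
  have hxC : x ∈ C := Subgroup.mem_centralizer_singleton_iff.mpr rfl
  have hC1 : 1 < Nat.card C := by
    rw [Finite.one_lt_card_iff_nontrivial]
    exact ⟨⟨x, hxC⟩, 1, fun h => hx (Subtype.ext_iff.mp h)⟩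
  interval_cases n
  · rw [pow_zero] at hn; omega
  · rw [hn, pow_one]; exact hp
end

section
/- Let G be a finite Cpo-group of order 55 and let H be a finite Cpo-group of order 22. Then |Cent(G)| = |Cent(H)| = 13, the commutator subgroups satisfy |G'| = |H'| = 11, and the central quotients G/Z(G) and H/Z(H) are not isomorphic (so G and H are not isoclinic). -/
/-- The number of distinct element centralizers of a group. -/
noncomputable def numCent (G : Type*) [Group G] : ℕ :=
  Set.ncard {H : Subgroup G | ∃ x : G, H = Subgroup.centralizer ({x} : Set G)}

section

open Subgroup

variable {K : Type*} [Group K]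

theorem Subgroup.index_eq_of_card_eq_mul {H : Subgroup K} {m n : ℕ} (hm : 0 < m)
    (hcard : Nat.card K = m * n) (hH : Nat.card H = m) : H.index = n := by
  have := H.card_mul_index
  rw [hH, hcard] at this
  exact Nat.eq_of_mul_eq_mul_left hm this

theorem Subgroup.eq_zpowers_of_prime_card {C : Subgroup K} (hC : (Nat.card C).Prime)
    {x : K} (hx : x ≠ 1) (hxC : x ∈ C) : C = zpowers x := by
  have hle : zpowers x ≤ C := zpowers_le.mpr hxC
  have hne : Nat.card (zpowers x) ≠ 1 := by
    simpa [Nat.card_zpowers, orderOf_eq_one_iff] using hx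
  have hcard := (hC.eq_one_or_self_of_dvd _ (card_dvd_of_le hle)).resolve_left hne
  have : Finite C := Nat.finite_of_card_ne_zero hC.ne_zero
  exact (eq_of_le_of_card_ge hle hcard.ge).symm

section PrimeMul

variable [Finite K] {p q : ℕ} [Fact p.Prime]

theorem Sylow.subsingleton_of_card_eq_mul (hqp : q < p) (hcard : Nat.card K = p * q) :
    Subsingleton (Sylow p K) := by
  obtain ⟨S⟩ := (inferInstance : Nonempty (Sylow p K))
  have hq : 0 < q := Nat.pos_of_mul_pos_left (hcard ▸ Nat.card_pos)
  have hindex : S.index ∣ q :=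
    ((Nat.Prime.coprime_iff_not_dvd Fact.out).mpr S.not_dvd_index).symm.dvd_of_dvd_mul_left
      (hcard ▸ S.index_dvd_card)
  have hlt : Nat.card (Sylow p K) < p :=
    (Nat.le_of_dvd hq (S.card_dvd_index.trans hindex)).trans_lt hqp
  have hmod : Nat.card (Sylow p K) % p = 1 % p := card_sylow_modEq_one p K
  rw [Nat.mod_eq_of_lt hlt, Nat.mod_eq_of_lt (Fact.out : p.Prime).one_lt] at hmod
  exact (Nat.card_eq_one_iff_unique.mp hmod).1

theorem Subgroup.eq_sylow_of_card_eq_mul (hqp : q < p) (hcard : Nat.card K = p * q)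
    {P : Subgroup K} (hP : Nat.card P = p) (S : Sylow p K) : P = S := by
  have := Sylow.subsingleton_of_card_eq_mul hqp hcard
  have hq : 0 < q := Nat.pos_of_mul_pos_left (hcard ▸ Nat.card_pos)
  have hindex : P.index = q := index_eq_of_card_eq_mul (Fact.out : p.Prime).pos hcard hP
  have hPp : IsPGroup p P := IsPGroup.of_card (n := 1) (by rw [hP, pow_one])
  exact congrArg Sylow.toSubgroup
    (Subsingleton.elim (hPp.toSylow (hindex ▸ Nat.not_dvd_of_pos_of_lt hq hqp)) S)

theorem Sylow.card_eq_of_card_eq_mul (hqp : q < p) (hcard : Nat.card K = p * q)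
    (S : Sylow p K) : Nat.card S = p := by
  obtain ⟨x, hx⟩ := exists_prime_orderOf_dvd_card' p (hcard ▸ dvd_mul_right p q)
  have hxcard : Nat.card (zpowers x) = p := by rw [Nat.card_zpowers, hx]
  rwa [← (zpowers x).eq_sylow_of_card_eq_mul hqp hcard hxcard S]

end PrimeMul

section NontrivialCentralizers

variable [Fintype K] [DecidableEq K] [DecidableEq (Subgroup K)]

variable (K) in
def nontrivialCentralizers : Finset (Subgroup K) :=
  (Finset.univ.erase 1).image fun x => centralizer {x}

theorem mem_nontrivialCentralizers {C : Subgroup K} :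
    C ∈ nontrivialCentralizers K ↔ ∃ x ≠ 1, centralizer {x} = C := by
  simp [nontrivialCentralizers]

end NontrivialCentralizers

namespace IsCpoGroup

theorem centralizer_eq_zpowers (hK : IsCpoGroup K) {x : K} (hx : x ≠ 1) :
    centralizer {x} = zpowers x :=
  eq_zpowers_of_prime_card (hK x hx) hx (mem_centralizer_singleton_iff.mpr rfl)

theorem centralizer_ne_top (hK : IsCpoGroup K) (hnp : ¬ (Nat.card K).Prime) {x : K}
    (hx : x ≠ 1) : centralizer {x} ≠ ⊤ :=
  fun htop => hnp (by simpa [htop] using hK x hx)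

theorem center_eq_bot (hK : IsCpoGroup K) (hnp : ¬ (Nat.card K).Prime) : center K = ⊥ := by
  refine eq_bot_iff.mpr fun z hz => mem_bot.mpr (not_not.mp fun hz1 => ?_)
  exact hK.centralizer_ne_top hnp hz1 (centralizer_eq_top_iff_subset.mpr (by simpa using hz))

section Counting

variable [Fintype K] [DecidableEq K] [DecidableEq (Subgroup K)]

theorem numCent_eq_card_nontrivialCentralizers_add_one (hK : IsCpoGroup K)
    (hnp : ¬ (Nat.card K).Prime) : numCent K = (nontrivialCentralizers K).card + 1 := by
  have hcent : {C : Subgroup K | ∃ x : K, C = centralizer {x}} =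
      ↑(insert ⊤ (nontrivialCentralizers K)) := by
    ext C
    simp only [Set.mem_ofPred_eq, Finset.coe_insert, Set.mem_insert_iff, Finset.mem_coe,
      mem_nontrivialCentralizers]
    constructor
    · rintro ⟨x, rfl⟩
      by_cases hx : x = 1
      · simp [hx]
      · exact .inr ⟨x, hx, rfl⟩
    · rintro (rfl | ⟨x, -, rfl⟩)
      · exact ⟨1, (centralizer_eq_top_iff_subset.mpr (by simp)).symm⟩
      · exact ⟨x, rfl⟩
  have htop : ⊤ ∉ nontrivialCentralizers K := by
    rw [mem_nontrivialCentralizers]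
    rintro ⟨x, hx, htop⟩
    exact hK.centralizer_ne_top hnp hx htop
  rw [numCent, hcent, Set.ncard_coe_finset, Finset.card_insert_of_notMem htop]

theorem centralizer_eq_iff_mem (hK : IsCpoGroup K) {C : Subgroup K}
    (hC : C ∈ nontrivialCentralizers K) {y : K} (hy : y ≠ 1) :
    centralizer {y} = C ↔ y ∈ C := by
  refine ⟨fun h => h ▸ mem_centralizer_singleton_iff.mpr rfl, fun hyC => ?_⟩
  obtain ⟨x, hx, rfl⟩ := mem_nontrivialCentralizers.mp hC
  rw [hK.centralizer_eq_zpowers hy, eq_zpowers_of_prime_card (hK x hx) hy hyC]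

theorem card_sub_one_eq_sum (hK : IsCpoGroup K) :
    Nat.card K - 1 = ∑ C ∈ nontrivialCentralizers K, (Nat.card C - 1) := by
  classical
  have hfiber : ∀ C ∈ nontrivialCentralizers K,
      {y ∈ Finset.univ.erase (1 : K) | centralizer {y} = C}.card = Nat.card C - 1 := by
    intro C hC
    rw [Finset.filter_congr fun y hy => centralizer_eq_iff_mem hK hC (Finset.ne_of_mem_erase hy),
      Finset.filter_erase, Finset.card_erase_of_mem (by simp [one_mem]),
      Nat.card_eq_fintype_card, Fintype.card_subtype]
  have hcard : (Finset.univ.erase (1 : K)).card = Nat.card K - 1 := by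
    rw [Finset.card_erase_of_mem (Finset.mem_univ _), Finset.card_univ, Nat.card_eq_fintype_card]
  rw [← hcard, Finset.card_eq_sum_card_fiberwise fun x hx =>
    Finset.mem_image_of_mem (fun y : K => centralizer {y}) hx]
  exact Finset.sum_congr rfl hfiber

end Counting

section PrimeMul

variable [Finite K] {p q : ℕ} [Fact p.Prime]

theorem card_commutator_eq (hK : IsCpoGroup K) (hq : q.Prime) (hqp : q < p)
    (hcard : Nat.card K = p * q) : Nat.card (commutator K) = p := by
  have hp : p.Prime := Fact.out
  have := Sylow.subsingleton_of_card_eq_mul hqp hcard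
  obtain ⟨S⟩ := (inferInstance : Nonempty (Sylow p K))
  have hS := S.card_eq_of_card_eq_mul hqp hcard
  have : (S : Subgroup K).Normal := S.normal_of_subsingleton
  have : Fact q.Prime := ⟨hq⟩
  have : IsCyclic (K ⧸ (S : Subgroup K)) :=
    isCyclic_of_prime_card (index_eq_of_card_eq_mul hp.pos hcard hS)
  have hle : commutator K ≤ S := Normal.quotient_commutative_iff_commutator_le.mp inferInstance
  have hne : commutator K ≠ ⊥ := by
    have hnp : ¬ (Nat.card K).Prime := hcard ▸ Nat.not_prime_mul hp.ne_one hq.ne_one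
    have : Nontrivial K := Finite.one_lt_card_iff_nontrivial.mp
      (by rw [hcard]; nlinarith [hp.two_le, hq.two_le])
    rw [Ne, commutator_eq_bot_iff_center_eq_top, hK.center_eq_bot hnp]
    exact bot_ne_top
  have hdvd : Nat.card (commutator K) ∣ p := hS ▸ card_dvd_of_le hle
  exact (hp.eq_one_or_self_of_dvd _ hdvd).resolve_left fun h => hne (card_eq_one.mp h)

theorem numCent_eq (hK : IsCpoGroup K) (hq : q.Prime) (hqp : q < p)
    (hcard : Nat.card K = p * q) : numCent K = p + 2 := by
  classical
  have := Fintype.ofFinite K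
  have hp : p.Prime := Fact.out
  obtain ⟨S⟩ := (inferInstance : Nonempty (Sylow p K))
  have hS := S.card_eq_of_card_eq_mul hqp hcard
  have hSmem : (S : Subgroup K) ∈ nontrivialCentralizers K := by
    obtain ⟨x, hxS, hx⟩ := (S : Subgroup K).bot_or_exists_ne_one.resolve_left
      fun hbot => hp.ne_one (hS ▸ card_eq_one.mpr hbot)
    refine mem_nontrivialCentralizers.mpr ⟨x, hx, ?_⟩
    rw [hK.centralizer_eq_zpowers hx, ← eq_zpowers_of_prime_card (hS.symm ▸ hp) hx hxS]
  have hcardq : ∀ C ∈ (nontrivialCentralizers K).erase S, Nat.card C = q := by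
    intro C hC
    obtain ⟨hCS, hC⟩ := Finset.mem_erase.mp hC
    obtain ⟨x, hx, rfl⟩ := mem_nontrivialCentralizers.mp hC
    have hr := hK x hx
    rcases hr.dvd_mul.mp (hcard ▸ card_subgroup_dvd_card _) with h | h
    · have hrp := (Nat.prime_dvd_prime_iff_eq hr hp).mp h
      exact absurd (eq_sylow_of_card_eq_mul hqp hcard hrp S) hCS
    · exact (Nat.prime_dvd_prime_iff_eq hr hq).mp h
  have hsum := hK.card_sub_one_eq_sum
  rw [← Finset.add_sum_erase _ _ hSmem, Finset.sum_congr rfl fun C hC => by rw [hcardq C hC],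
    Finset.sum_const, Finset.card_erase_of_mem hSmem, smul_eq_mul, hS, hcard] at hsum
  have hnp : ¬ (Nat.card K).Prime := hcard ▸ Nat.not_prime_mul hp.ne_one hq.ne_one
  rw [hK.numCent_eq_card_nontrivialCentralizers_add_one hnp]
  have hpq : p * (q - 1) = p * q - p := Nat.mul_sub_one p q
  have hp_le : p ≤ p * q := Nat.le_mul_of_pos_right p hq.pos
  have hn : (nontrivialCentralizers K).card - 1 = p :=
    Nat.eq_of_mul_eq_mul_right (Nat.sub_pos_of_lt hq.one_lt) (by omega)
  have := Finset.card_pos.mpr ⟨_, hSmem⟩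
  omega

end PrimeMul

end IsCpoGroup

end

theorem stmt_14 (G H : Type*) [Group G] [Finite G] [Group H] [Finite H]
    (hG : IsCpoGroup G) (hH : IsCpoGroup H)
    (hGcard : Nat.card G = 55) (hHcard : Nat.card H = 22) :
    numCent G = 13 ∧ numCent H = 13 ∧
      Nat.card (commutator G) = 11 ∧ Nat.card (commutator H) = 11 ∧
      ¬ Nonempty ((G ⧸ Subgroup.center G) ≃* (H ⧸ Subgroup.center H)) := by
  have : Fact (Nat.Prime 11) := ⟨by norm_num⟩
  have hG' : Nat.card G = 11 * 5 := hGcard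
  have hH' : Nat.card H = 11 * 2 := hHcard
  refine ⟨hG.numCent_eq Nat.prime_five (by norm_num) hG',
    hH.numCent_eq Nat.prime_two (by norm_num) hH',
    hG.card_commutator_eq Nat.prime_five (by norm_num) hG',
    hH.card_commutator_eq Nat.prime_two (by norm_num) hH', ?_⟩
  rintro ⟨e⟩
  have hGZ : Subgroup.center G = ⊥ := hG.center_eq_bot (by rw [hGcard]; norm_num)
  have hHZ : Subgroup.center H = ⊥ := hH.center_eq_bot (by rw [hHcard]; norm_num)
  have hcard := Nat.card_congr e.toEquiv
  rw [← Subgroup.index_eq_card, ← Subgroup.index_eq_card, hGZ, hHZ, Subgroup.index_bot,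
    Subgroup.index_bot, hGcard, hHcard] at hcard
  exact absurd hcard (by norm_num)
end

section
/- Let p, q, r be primes with p > q and p > r. Let G be a finite Cpo-group of order qp and H a finite Cpo-group of order rp. Then |Cent(G)| = |Cent(H)| = p + 2 and the commutator subgroups satisfy |G'| = |H'| = p. -/
/-! In a Cpo-group every centralizer `C(x)`, `x ≠ 1`, is the cyclic group `⟨x⟩` of prime order, so
`Cent(G)` consists of `G` and the subgroups of prime order. When `|G| = qp` with `q < p`, these are
the Sylow subgroups: the Sylow `p`-subgroup `P` is unique, and `G' ≤ P` since `G/P` is cyclic.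
As `G` is not abelian, `G' = P`; and there are `p` Sylow `q`-subgroups, since a normal one would
also contain `G'`. Hence `|Cent(G)| = 1 + 1 + p`. -/

theorem Nat.factorization_mul_prime_self {m ℓ : ℕ} (hm : m.Prime) (hℓ : ℓ.Prime) (hne : m ≠ ℓ) :
    (m * ℓ).factorization ℓ = 1 := by
  simp [Nat.factorization_mul hm.ne_zero hℓ.ne_zero, hm.factorization, hℓ.factorization, hne]

section Subgroups

variable {G : Type*} [Group G]

theorem Subgroup.commutator_le_of_prime_index {N : Subgroup G} [N.Normal] (hN : N.index.Prime) :
    _root_.commutator G ≤ N := by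
  have := Fact.mk hN
  have : IsCyclic (G ⧸ N) := isCyclic_of_prime_card (Subgroup.index_eq_card N).symm
  exact Subgroup.Normal.quotient_commutative_iff_commutator_le.mp inferInstance

variable [Finite G]

theorem Subgroup.zpowers_eq_of_prime_card {K : Subgroup G} (hK : (Nat.card K).Prime) {x : G}
    (hxK : x ∈ K) (hx : x ≠ 1) : Subgroup.zpowers x = K := by
  have hle : Subgroup.zpowers x ≤ K := Subgroup.zpowers_le.mpr hxK
  have hx' : Nat.card (Subgroup.zpowers x) ≠ 1 := by
    rwa [Nat.card_zpowers, Ne, orderOf_eq_one_iff]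
  have hdvd := (Nat.dvd_prime hK).mp (Subgroup.card_dvd_of_le hle)
  exact Subgroup.eq_of_le_of_card_ge hle (hdvd.resolve_left hx').ge

theorem Sylow.card_eq_of_factorization_eq_one {ℓ : ℕ} [Fact ℓ.Prime] (P : Sylow ℓ G)
    (hℓ : (Nat.card G).factorization ℓ = 1) : Nat.card P = ℓ := by
  rw [P.card_eq_multiplicity, hℓ, pow_one]

theorem Sylow.card_eq_one_of_index_lt {ℓ : ℕ} [hℓ : Fact ℓ.Prime] (P : Sylow ℓ G)
    (h : (P : Subgroup G).index < ℓ) : Nat.card (Sylow ℓ G) = 1 := by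
  have hle : Nat.card (Sylow ℓ G) ≤ (P : Subgroup G).index :=
    Nat.le_of_dvd (Nat.pos_of_ne_zero Subgroup.index_ne_zero_of_finite) P.card_dvd_index
  exact (card_sylow_modEq_one ℓ G).eq_of_lt_of_lt (hle.trans_lt h) hℓ.out.one_lt

theorem ncard_setOf_card_eq_eq_card_sylow {ℓ : ℕ} [Fact ℓ.Prime]
    (hℓ : (Nat.card G).factorization ℓ = 1) :
    {K : Subgroup G | Nat.card K = ℓ}.ncard = Nat.card (Sylow ℓ G) := by
  have hpow : ∀ K : Subgroup G, Nat.card K = ℓ → Nat.card K = ℓ ^ (Nat.card G).factorization ℓ :=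
    fun K hK => by rw [hℓ, pow_one, hK]
  rw [← Nat.card_coe_set_eq]
  exact Nat.card_congr
    { toFun := fun K => Sylow.ofCard K.1 (hpow K.1 K.2)
      invFun := fun P => ⟨P, P.card_eq_of_factorization_eq_one hℓ⟩
      left_inv := fun _ => rfl
      right_inv := fun _ => rfl }

end Subgroups

namespace IsCpoGroup

variable {G : Type*} [Group G]

theorem commutator_ne_bot [Nontrivial G] (hG : IsCpoGroup G) (hcard : ¬ (Nat.card G).Prime) :
    commutator G ≠ ⊥ := by
  intro hbot
  obtain ⟨x, hx⟩ := exists_ne (1 : G)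
  have hcent : Subgroup.centralizer ({x} : Set G) = ⊤ :=
    top_le_iff.mp <| ((commutator_eq_bot_iff_center_eq_top G).mp hbot).ge.trans
      (Subgroup.center_le_centralizer _)
  exact hcard (by simpa [hcent] using hG x hx)

variable [Finite G]

theorem centralizer_eq_zpowers_s15 (hG : IsCpoGroup G) {x : G} (hx : x ≠ 1) :
    Subgroup.centralizer ({x} : Set G) = Subgroup.zpowers x :=
  (Subgroup.zpowers_eq_of_prime_card (hG x hx)
    (Subgroup.mem_centralizer_singleton_iff.mpr rfl) hx).symm

theorem setOf_centralizer_eq (hG : IsCpoGroup G) :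
    {K : Subgroup G | ∃ x : G, K = Subgroup.centralizer ({x} : Set G)} =
      insert ⊤ {K : Subgroup G | (Nat.card K).Prime} := by
  have hcent_one : Subgroup.centralizer ({1} : Set G) = ⊤ := by
    ext; simp [Subgroup.mem_centralizer_singleton_iff]
  ext K
  constructor
  · rintro ⟨x, rfl⟩
    by_cases hx : x = 1
    · exact .inl (hx ▸ hcent_one)
    · exact .inr (hG x hx)
  · rintro (rfl | hK)
    · exact ⟨1, hcent_one.symm⟩
    · obtain ⟨x, hxK, hx⟩ := (K.bot_or_exists_ne_one).resolve_left fun h => by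
        simp [h, Nat.not_prime_one] at hK
      exact ⟨x, by rw [hG.centralizer_eq_zpowers_s15 hx, Subgroup.zpowers_eq_of_prime_card hK hxK hx]⟩

theorem numCent_eq_of_card_eq_mul (hG : IsCpoGroup G) {p q : ℕ} [hp : Fact p.Prime]
    [hq : Fact q.Prime] (hne : q ≠ p) (hcard : Nat.card G = q * p) :
    numCent G = Nat.card (Sylow p G) + Nat.card (Sylow q G) + 1 := by
  have hprime : {K : Subgroup G | (Nat.card K).Prime} =
      {K : Subgroup G | Nat.card K = p} ∪ {K | Nat.card K = q} := by
    ext K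
    simp only [Set.mem_union, Set.mem_ofPred_eq]
    refine ⟨fun hK => ?_, by rintro (h | h) <;> rw [h] <;> exact Fact.out⟩
    have hdvd : Nat.card K ∣ q * p := hcard ▸ K.card_subgroup_dvd_card
    rcases (Nat.Prime.dvd_mul hK).mp hdvd with h | h
    · exact .inr ((Nat.prime_dvd_prime_iff_eq hK hq.out).mp h)
    · exact .inl ((Nat.prime_dvd_prime_iff_eq hK hp.out).mp h)
  have htop : (⊤ : Subgroup G) ∉ {K : Subgroup G | Nat.card K = p} ∪ {K | Nat.card K = q} := by
    simp only [Set.mem_union, Set.mem_ofPred_eq, Subgroup.card_top, hcard]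
    have := hp.out.two_le; have := hq.out.two_le
    rintro (h | h) <;> nlinarith
  have hdisj : Disjoint {K : Subgroup G | Nat.card K = p} {K | Nat.card K = q} :=
    Set.disjoint_left.mpr fun K hKp hKq => hne (hKq.symm.trans hKp)
  rw [numCent, hG.setOf_centralizer_eq, hprime, Set.ncard_insert_of_notMem htop,
    Set.ncard_union_eq hdisj,
    ncard_setOf_card_eq_eq_card_sylow (hcard ▸ Nat.factorization_mul_prime_self hq.out hp.out hne),
    ncard_setOf_card_eq_eq_card_sylow (hcard ▸ mul_comm p q ▸
      Nat.factorization_mul_prime_self hp.out hq.out hne.symm)]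

theorem card_commutator_eq_and_numCent_eq (hG : IsCpoGroup G) {p q : ℕ} (hp : p.Prime)
    (hq : q.Prime) (hqp : q < p) (hcard : Nat.card G = q * p) :
    Nat.card (commutator G) = p ∧ numCent G = p + 2 := by
  have := Fact.mk hp
  have := Fact.mk hq
  obtain ⟨P⟩ : Nonempty (Sylow p G) := inferInstance
  obtain ⟨Q⟩ : Nonempty (Sylow q G) := inferInstance
  have hPcard : Nat.card P = p := P.card_eq_of_factorization_eq_one
    (hcard ▸ Nat.factorization_mul_prime_self hq hp hqp.ne)
  have hQcard : Nat.card Q = q := Q.card_eq_of_factorization_eq_one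
    (hcard ▸ mul_comm p q ▸ Nat.factorization_mul_prime_self hp hq hqp.ne')
  have hPindex : (P : Subgroup G).index = q :=
    Nat.eq_of_mul_eq_mul_right hp.pos (by rw [← hcard, ← (P : Subgroup G).index_mul_card, hPcard])
  have hQindex : (Q : Subgroup G).index = p :=
    Nat.eq_of_mul_eq_mul_left hq.pos (by rw [← hcard, ← (Q : Subgroup G).card_mul_index, hQcard])
  have : Subsingleton (Sylow p G) :=
    (Nat.card_eq_one_iff_unique.mp (P.card_eq_one_of_index_lt (hPindex ▸ hqp))).1
  have := P.normal_of_subsingleton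
  have hle_P : commutator G ≤ P := Subgroup.commutator_le_of_prime_index (hPindex ▸ hq)
  have : Nontrivial G := Finite.one_lt_card_iff_nontrivial.mp (by nlinarith [hp.two_le, hq.two_le])
  have hne_bot : commutator G ≠ ⊥ := hG.commutator_ne_bot
    (hcard ▸ Nat.not_prime_mul hq.ne_one hp.ne_one)
  have hcomm : Nat.card (commutator G) = p := by
    have := (Nat.dvd_prime hp).mp (hPcard ▸ Subgroup.card_dvd_of_le hle_P)
    exact this.resolve_left (mt Subgroup.card_eq_one.mp hne_bot)
  have hsylow_q : Nat.card (Sylow q G) = p := by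
    refine ((Nat.dvd_prime hp).mp (hQindex ▸ Q.card_dvd_index)).resolve_left fun h => hne_bot ?_
    have : Subsingleton (Sylow q G) := (Nat.card_eq_one_iff_unique.mp h).1
    have := Q.normal_of_subsingleton
    have hle_Q : commutator G ≤ Q := Subgroup.commutator_le_of_prime_index (hQindex ▸ hp)
    have hdisj : Disjoint (P : Subgroup G) Q := Subgroup.disjoint_of_coprime_natCard
      (by rw [hPcard, hQcard]; exact (Nat.coprime_primes hp hq).mpr hqp.ne')
    exact eq_bot_iff.mpr ((le_inf hle_P hle_Q).trans (disjoint_iff.mp hdisj).le)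
  refine ⟨hcomm, ?_⟩
  rw [hG.numCent_eq_of_card_eq_mul hqp.ne hcard, hsylow_q,
    Nat.card_eq_one_iff_unique.mpr ⟨inferInstance, ⟨P⟩⟩]
  ring

end IsCpoGroup

theorem stmt_15 (G H : Type*) [Group G] [Finite G] [Group H] [Finite H]
    (p q r : ℕ) (hp : p.Prime) (hq : q.Prime) (hr : r.Prime)
    (hpq : q < p) (hpr : r < p)
    (hG : IsCpoGroup G) (hH : IsCpoGroup H)
    (hGcard : Nat.card G = q * p) (hHcard : Nat.card H = r * p) :
    numCent G = p + 2 ∧ numCent H = p + 2 ∧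
      Nat.card (commutator G) = p ∧ Nat.card (commutator H) = p := by
  obtain ⟨hG', hGcent⟩ := hG.card_commutator_eq_and_numCent_eq hp hq hpq hGcard
  obtain ⟨hH', hHcent⟩ := hH.card_commutator_eq_and_numCent_eq hp hr hpr hHcard
  exact ⟨hGcent, hHcent, hG', hH'⟩
end

section
/- Let G be a finite non-abelian Cpo-group and let p be the smallest prime divisor of |G|. Then |Cent(G)| ≥ p + 3. -/
open Pointwise


private lemma mulComm_of_isCyclic {H : Type*} [Group H] (h : IsCyclic H) (a b : H) :
    a * b = b * a := by
  obtain ⟨g, hg⟩ := h.exists_generator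
  obtain ⟨i, rfl⟩ := Subgroup.mem_zpowers_iff.mp (hg a)
  obtain ⟨j, rfl⟩ := Subgroup.mem_zpowers_iff.mp (hg b)
  rw [← zpow_add, ← zpow_add, add_comm]

/-- In a Cpo-group, the centralizer of an element of prime order `r` has order `r`. -/
private lemma cardCent_eq {G : Type*} [Group G] [Finite G] (hG : IsCpoGroup G) {y : G} {r : ℕ}
    (hr : r.Prime) (hy : orderOf y = r) :
    Nat.card (Subgroup.centralizer ({y} : Set G)) = r := by
  have hy1 : y ≠ 1 := by
    intro h; rw [h, orderOf_one] at hy; exact hr.ne_one hy.symm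
  have hmem : y ∈ Subgroup.centralizer ({y} : Set G) :=
    Subgroup.mem_centralizer_singleton_iff.mpr rfl
  have hdvd : r ∣ Nat.card (Subgroup.centralizer ({y} : Set G)) := by
    rw [← hy]; exact Subgroup.orderOf_dvd_natCard _ hmem
  exact ((Nat.prime_dvd_prime_iff_eq hr (hG y hy1)).mp hdvd).symm

theorem stmt_16 (G : Type*) [Group G] [Finite G] (hG : IsCpoGroup G)
    (hna : ¬ ∀ a b : G, a * b = b * a)
    (p : ℕ) (hp : p.Prime) (hdvd : p ∣ Nat.card G)
    (hmin : ∀ q : ℕ, q.Prime → q ∣ Nat.card G → p ≤ q) :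
    numCent G ≥ p + 3 := by
  classical
  haveI : Fact p.Prime := ⟨hp⟩
  have hn0 : Nat.card G ≠ 0 := Nat.card_pos.ne'
  -- |G| is not prime
  have hnp : ¬ (Nat.card G).Prime := by
    intro h
    haveI : Fact (Nat.card G).Prime := ⟨h⟩
    exact hna (mulComm_of_isCyclic (isCyclic_of_prime_card (p := Nat.card G) rfl))
  -- G is nontrivial
  have hnt : Nontrivial G := by
    rcases subsingleton_or_nontrivial G with hs | hn
    · exact absurd (fun a b => Subsingleton.elim _ _) hna
    · exact hn
  -- there is a prime q ≠ p dividing |G|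
  obtain ⟨q, hq, hqdvd, hqne⟩ : ∃ q : ℕ, q.Prime ∧ q ∣ Nat.card G ∧ q ≠ p := by
    by_contra hcon
    push_neg at hcon
    have hpG : IsPGroup p G :=
      IsPGroup.of_card (Nat.eq_prime_pow_of_unique_prime_dvd hn0
        (fun {q} hq hqd => hcon q hq hqd))
    haveI := IsPGroup.center_nontrivial hpG
    obtain ⟨z, hz⟩ := exists_ne (1 : Subgroup.center G)
    have hz1 : (z : G) ≠ 1 := fun h => hz (Subtype.ext h)
    have htop : Subgroup.centralizer ({(z : G)} : Set G) = ⊤ := by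
      rw [eq_top_iff]; intro g _
      exact Subgroup.mem_centralizer_singleton_iff.mpr
        (Subgroup.mem_center_iff.mp z.2 g)
    have := hG (z : G) hz1
    rw [htop, Subgroup.card_top] at this
    exact hnp this
  have hpq : p < q := lt_of_le_of_ne (hmin q hq hqdvd) (Ne.symm hqne)
  -- p^2 does not divide |G|
  have hp2 : ¬ p ^ 2 ∣ Nat.card G := by
    intro h2
    obtain ⟨P⟩ : Nonempty (Sylow p G) := Sylow.nonempty
    have hcard : Nat.card P = p ^ (Nat.card G).factorization p := P.card_eq_multiplicity
    have hge2 : 2 ≤ (Nat.card G).factorization p :=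
      (Nat.Prime.pow_dvd_iff_le_factorization hp hn0).mp h2
    have hnt' : Nontrivial P := by
      rw [← Finite.one_lt_card_iff_nontrivial, hcard]
      exact Nat.one_lt_pow (by omega) hp.one_lt
    haveI := IsPGroup.center_nontrivial P.isPGroup'
    obtain ⟨z, hz⟩ := exists_ne (1 : Subgroup.center (P : Subgroup G))
    have hz1 : ((z : (P : Subgroup G)) : G) ≠ 1 := by
      intro h
      exact hz (Subtype.ext (Subtype.ext h))
    have hle : (P : Subgroup G) ≤ Subgroup.centralizer ({((z : (P : Subgroup G)) : G)} : Set G) := by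
      intro g hg
      have := Subgroup.mem_center_iff.mp z.2 ⟨g, hg⟩
      exact Subgroup.mem_centralizer_singleton_iff.mpr (congrArg Subtype.val this)
    have hdv : Nat.card (P : Subgroup G) ∣
        Nat.card (Subgroup.centralizer ({((z : (P : Subgroup G)) : G)} : Set G)) :=
      Subgroup.card_dvd_of_le hle
    have hprime := hG _ hz1
    rw [hcard] at hdv
    have hpd : p ∣ Nat.card (Subgroup.centralizer ({((z : (P : Subgroup G)) : G)} : Set G)) :=
      dvd_trans (dvd_pow_self p (by omega)) hdv
    have : Nat.card (Subgroup.centralizer ({((z : (P : Subgroup G)) : G)} : Set G)) = p :=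
      ((Nat.prime_dvd_prime_iff_eq hp hprime).mp hpd).symm
    have h1 : p ^ (Nat.card G).factorization p ≤ p := by
      rw [this] at hdv
      exact Nat.le_of_dvd hp.pos hdv
    have h2 := Nat.pow_le_pow_right hp.one_lt.le hge2
    have h3 : p ^ 2 = p * p := sq p
    have h4 := hp.two_le
    have h5 : p < p * p := lt_mul_iff_one_lt_left hp.pos |>.mpr hp.one_lt
    omega
  -- finiteness instances
  haveI : Finite (Subgroup G) :=
    Finite.of_injective (fun H : Subgroup G => (H : Set G)) SetLike.coe_injective
  haveI : Finite (Sylow p G) :=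
    Finite.of_injective (fun P : Sylow p G => (P : Subgroup G)) (fun _ _ h => Sylow.ext h)
  haveI : Fact q.Prime := ⟨hq⟩
  -- every Sylow p-subgroup has cardinality p
  have hfact1 : (Nat.card G).factorization p = 1 := by
    have h1 : 1 ≤ (Nat.card G).factorization p :=
      (Nat.Prime.pow_dvd_iff_le_factorization hp hn0).mp (by rwa [pow_one])
    have h2 : ¬ 2 ≤ (Nat.card G).factorization p := fun h =>
      hp2 ((Nat.Prime.pow_dvd_iff_le_factorization hp hn0).mpr h)
    omega
  have hSylCard : ∀ P : Sylow p G, Nat.card (P : Subgroup G) = p := by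
    intro P
    rw [P.card_eq_multiplicity, hfact1, pow_one]
  -- an element of order q and its centralizer
  obtain ⟨y, hy⟩ := exists_prime_orderOf_dvd_card' q hqdvd
  have hcenty : Nat.card (Subgroup.centralizer ({y} : Set G)) = q := cardCent_eq hG hq hy
  -- the number of Sylow p-subgroups is not 1
  have hone : Nat.card (Sylow p G) ≠ 1 := by
    intro h1
    obtain ⟨x, hx⟩ := exists_prime_orderOf_dvd_card' p hdvd
    have hxpg : IsPGroup p (Subgroup.zpowers x) :=
      IsPGroup.of_card (n := 1) (by rw [Nat.card_zpowers, hx, pow_one])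
    obtain ⟨P, hP⟩ := hxpg.exists_le_sylow
    have hPz : Subgroup.zpowers x = (P : Subgroup G) :=
      Subgroup.eq_of_le_of_card_ge hP (by rw [hSylCard P, Nat.card_zpowers, hx])
    haveI : Subsingleton (Sylow p G) := (Nat.card_eq_one_iff_unique.mp h1).1
    have hconj : y * x * y⁻¹ ∈ Subgroup.zpowers x := by
      have hxP : x ∈ (P : Subgroup G) := hP (Subgroup.mem_zpowers x)
      have h2 : MulAut.conj y • x ∈ MulAut.conj y • (P : Subgroup G) :=
        Subgroup.smul_mem_pointwise_smul _ _ _ hxP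
      have h3 : MulAut.conj y • (P : Subgroup G) = ((y • P : Sylow p G) : Subgroup G) :=
        (Sylow.pointwise_smul_def (g := MulAut.conj y) (P := P)).symm
      have h4 : (y • P : Sylow p G) = P := Subsingleton.elim _ _
      rw [h3, h4, ← hPz] at h2
      simpa [MulAut.smul_def] using h2
    obtain ⟨k, hk⟩ := (Submonoid.mem_powers_iff _ _).mp
      (mem_powers_iff_mem_zpowers.mpr hconj)
    have hiter : ∀ j : ℕ, y ^ j * x * (y ^ j)⁻¹ = x ^ k ^ j := by
      intro j
      induction j with
      | zero => simp
      | succ j ih =>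
        have h5 : y ^ (j + 1) * x * (y ^ (j + 1))⁻¹ = y * (y ^ j * x * (y ^ j)⁻¹) * y⁻¹ := by
          rw [pow_succ']; group
        rw [h5, ih, ← conj_pow, ← hk, ← pow_mul, ← pow_succ']
    have hxq : x = x ^ k ^ q := by
      have h6 := hiter q
      have hyq : y ^ q = 1 := by rw [← hy]; exact pow_orderOf_eq_one y
      rw [hyq] at h6
      simpa using h6
    have hmodk : 1 ≡ k ^ q [MOD p] := by
      have h7 : x ^ 1 = x ^ k ^ q := by rw [pow_one]; exact hxq
      have h8 := pow_eq_pow_iff_modEq.mp h7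
      rwa [hx] at h8
    have hk0 : (k : ZMod p) ≠ 0 := by
      intro h0
      have hpk : p ∣ k := (ZMod.natCast_eq_zero_iff k p).mp h0
      have h9 : x ^ k = 1 := orderOf_dvd_iff_pow_eq_one.mp (hx ▸ hpk)
      rw [hk] at h9
      have hx1 : x = 1 := by
        have h10 : x = y⁻¹ * (y * x * y⁻¹) * y := by group
        rw [h10, h9]; group
      rw [hx1, orderOf_one] at hx
      exact hp.ne_one hx.symm
    have hu : IsUnit ((k : ZMod p)) := hk0.isUnit
    have huq : hu.unit ^ q = 1 := by
      ext
      push_cast [hu.unit_spec]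
      have h11 : ((k ^ q : ℕ) : ZMod p) = ((1 : ℕ) : ZMod p) :=
        (ZMod.natCast_eq_natCast_iff _ _ _).mpr hmodk.symm
      push_cast at h11
      exact h11
    have hou : orderOf hu.unit ∣ q := orderOf_dvd_of_pow_eq_one huq
    have hcardu : orderOf hu.unit ∣ p - 1 := by
      have h12 := orderOf_dvd_card (x := hu.unit)
      rwa [ZMod.card_units] at h12
    have hord1 : orderOf hu.unit = 1 := by
      rcases hq.eq_one_or_self_of_dvd _ hou with h | h
      · exact h
      · exfalso
        rw [h] at hcardu
        have h13 : q ≤ p - 1 := Nat.le_of_dvd (by have := hp.two_le; omega) hcardu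
        omega
    have hk1 : (k : ZMod p) = 1 := by
      have h14 := orderOf_eq_one_iff.mp hord1
      rw [← hu.unit_spec, h14, Units.val_one]
    have hkmod : k ≡ 1 [MOD p] :=
      (ZMod.natCast_eq_natCast_iff _ _ _).mp (by push_cast; exact hk1)
    have hxk : x ^ k = x := by
      have h15 : x ^ k = x ^ 1 := pow_eq_pow_iff_modEq.mpr (by rwa [hx])
      simpa using h15
    have hyc : y ∈ Subgroup.centralizer ({x} : Set G) := by
      rw [hk] at hxk
      refine Subgroup.mem_centralizer_singleton_iff.mpr ?_
      have h16 : y * x * y⁻¹ * y = x * y := by rw [hxk]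
      simpa [mul_assoc] using h16
    have hcx : Nat.card (Subgroup.centralizer ({x} : Set G)) = p := cardCent_eq hG hp hx
    have hqp : q ∣ p := by
      rw [← hy, ← hcx]
      exact Subgroup.orderOf_dvd_natCard _ hyc
    exact hqne ((Nat.prime_dvd_prime_iff_eq hq hp).mp hqp)
  -- hence there are at least p + 1 Sylow p-subgroups
  have hSyl : p + 1 ≤ Nat.card (Sylow p G) := by
    have hmod := card_sylow_modEq_one p G
    have hpos : 0 < Nat.card (Sylow p G) := Nat.card_pos
    have hdvd1 : p ∣ Nat.card (Sylow p G) - 1 :=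
      (Nat.modEq_iff_dvd' hpos).mp hmod.symm
    have : p ≤ Nat.card (Sylow p G) - 1 := Nat.le_of_dvd (by omega) hdvd1
    omega
  -- assemble the counting
  set S := {H : Subgroup G | ∃ x : G, H = Subgroup.centralizer ({x} : Set G)} with hS
  set A := Set.range (fun P : Sylow p G => (P : Subgroup G)) with hA
  have hAcard : A.ncard = Nat.card (Sylow p G) := by
    rw [hA, ← Set.image_univ,
      Set.ncard_image_of_injective _ (fun _ _ h => Sylow.ext h), Set.ncard_univ]
  -- each Sylow p-subgroup is a centralizer
  have hAsub : A ⊆ S := by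
    rintro _ ⟨P, rfl⟩
    have hnt' : Nontrivial (P : Subgroup G) := by
      rw [← Finite.one_lt_card_iff_nontrivial, hSylCard P]
      exact hp.one_lt
    obtain ⟨z, hz⟩ := exists_ne (1 : (P : Subgroup G))
    have hz1 : (z : G) ≠ 1 := fun h => hz (Subtype.ext h)
    have hzo : orderOf (z : G) = p := by
      have hd : orderOf (z : G) ∣ p := by
        have h17 := Subgroup.orderOf_dvd_natCard (P : Subgroup G) z.2
        rwa [hSylCard P] at h17
      rcases (Nat.Prime.eq_one_or_self_of_dvd hp _ hd) with h | h
      · exact absurd (orderOf_eq_one_iff.mp h) hz1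
      · exact h
    have hcyc : IsCyclic (P : Subgroup G) := isCyclic_of_prime_card (p := p) (hSylCard P)
    have hle : (P : Subgroup G) ≤ Subgroup.centralizer ({(z : G)} : Set G) := by
      intro g hg
      refine Subgroup.mem_centralizer_singleton_iff.mpr ?_
      exact congrArg Subtype.val (mulComm_of_isCyclic hcyc (⟨g, hg⟩ : (P : Subgroup G)) z)
    have heq : (P : Subgroup G) = Subgroup.centralizer ({(z : G)} : Set G) :=
      Subgroup.eq_of_le_of_card_ge hle (by rw [cardCent_eq hG hp hzo, hSylCard P])
    exact ⟨(z : G), heq⟩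
  -- ⊤ and the centralizer of y are centralizers not among the Sylow p-subgroups
  have htopmem : (⊤ : Subgroup G) ∈ S := by
    have h18 : Subgroup.centralizer ({(1 : G)} : Set G) = ⊤ := by
      rw [eq_top_iff]
      intro g _
      exact Subgroup.mem_centralizer_singleton_iff.mpr (by group)
    exact ⟨1, h18.symm⟩
  have hymem : Subgroup.centralizer ({y} : Set G) ∈ S := ⟨y, rfl⟩
  have htopne : (⊤ : Subgroup G) ≠ Subgroup.centralizer ({y} : Set G) := by
    intro h
    apply hnp
    rw [← Subgroup.card_top (G := G), h, hcenty]
    exact hq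
  have htopA : (⊤ : Subgroup G) ∉ A := by
    rintro ⟨P, hPt⟩
    apply hnp
    rw [← Subgroup.card_top (G := G), ← hPt, hSylCard P]
    exact hp
  have hyA : Subgroup.centralizer ({y} : Set G) ∉ A := by
    rintro ⟨P, hPt⟩
    apply hqne
    rw [← hcenty, ← hPt, hSylCard P]
  have hdisj : Disjoint A ({⊤, Subgroup.centralizer ({y} : Set G)} : Set (Subgroup G)) := by
    rw [Set.disjoint_right]
    rintro a (rfl | rfl)
    · exact htopA
    · exact hyA
  have hsub : A ∪ ({⊤, Subgroup.centralizer ({y} : Set G)} : Set (Subgroup G)) ⊆ S := by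
    rintro a (ha | rfl | rfl)
    · exact hAsub ha
    · exact htopmem
    · exact hymem
  have hcount : (A ∪ ({⊤, Subgroup.centralizer ({y} : Set G)} : Set (Subgroup G))).ncard
      = A.ncard + 2 := by
    rw [Set.ncard_union_eq hdisj (Set.toFinite _) (Set.toFinite _),
      Set.ncard_pair htopne]
  have hfin : S.Finite := Set.toFinite _
  have hle' : (A ∪ ({⊤, Subgroup.centralizer ({y} : Set G)} : Set (Subgroup G))).ncard ≤
      S.ncard := Set.ncard_le_ncard hsub hfin
  have : numCent G = S.ncard := rfl
  rw [ge_iff_le, this ]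
  omega
end

section
/- Let G be a finite group such that G' ∩ Z(G) = 1 and the quotient G/Z(G) is perfect (i.e., equals its own commutator subgroup). Then |Cent(G)| = |Cent(G')|. -/
/-!
Perfection of `G / Z(G)` says `G = G' Z(G)`, so every `x = c z` with `c ∈ G'` and `z` central,
and `C_G(x) = C_G(c)`. Intersecting with `G'` maps `Cent(G)` onto `Cent(G')`, and it is injective
because a subgroup `K ≥ Z(G)` is recovered from `K ∩ G'` as `(K ∩ G') Z(G)`.
-/

namespace Subgroup

variable {G : Type*} [Group G]

theorem centralizer_mul_singleton_of_mem_center {z : G} (hz : z ∈ center G) (g : G) :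
    centralizer ({g * z} : Set G) = centralizer {g} := by
  ext k
  simp only [mem_centralizer_singleton_iff]
  rw [← mul_assoc, mul_assoc g, ← mem_center_iff.mp hz k, ← mul_assoc, mul_left_inj]

theorem exists_centralizer_eq_of_sup_center_eq_top {H : Subgroup G} (hH : H ⊔ center G = ⊤)
    (x : G) : ∃ h ∈ H, centralizer ({x} : Set G) = centralizer {h} := by
  obtain ⟨h, hh, z, hz, rfl⟩ := mem_sup_of_normal_right.mp (hH ▸ mem_top x)
  exact ⟨h, hh, centralizer_mul_singleton_of_mem_center hz h⟩

theorem centralizer_subgroupOf_singleton {H : Subgroup G} (h : H) :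
    (centralizer ({(h : G)} : Set G)).subgroupOf H = centralizer {h} := by
  ext y
  simp only [mem_subgroupOf, mem_centralizer_singleton_iff, Subtype.ext_iff, coe_mul]

theorem eq_of_inf_eq_of_sup_eq_top {H N K₁ K₂ : Subgroup G} [N.Normal] (hHN : H ⊔ N = ⊤)
    (h₁ : N ≤ K₁) (h₂ : N ≤ K₂) (h : K₁ ⊓ H = K₂ ⊓ H) : K₁ = K₂ := by
  ext g
  obtain ⟨a, ha, n, hn, rfl⟩ := mem_sup_of_normal_right.mp (hHN ▸ mem_top g)
  rw [mul_mem_cancel_right (h₁ hn), mul_mem_cancel_right (h₂ hn)]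
  simpa [ha] using SetLike.ext_iff.mp h a

end Subgroup

open Subgroup

theorem commutator_sup_eq_top_of_commutator_quotient_eq_top {G : Type*} [Group G]
    (N : Subgroup G) [N.Normal] (h : commutator (G ⧸ N) = ⊤) : commutator G ⊔ N = ⊤ := by
  have hmap : (commutator G).map (QuotientGroup.mk' N) = ⊤ := by
    rw [map_commutator_eq, QuotientGroup.range_mk', ← commutator_def, h]
  rw [← QuotientGroup.ker_mk' N, ← comap_map_eq, hmap, comap_top]

theorem numCent_eq_of_sup_center_eq_top {G : Type*} [Group G] (H : Subgroup G)
    (hH : H ⊔ center G = ⊤) : numCent G = numCent H := by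
  set S := {K : Subgroup G | ∃ x : G, K = centralizer ({x} : Set G)}
  have himage : (fun K : Subgroup G => K.subgroupOf H) '' S =
      {K : Subgroup H | ∃ x : H, K = centralizer ({x} : Set H)} := by
    ext K
    constructor
    · rintro ⟨_, ⟨x, rfl⟩, rfl⟩
      obtain ⟨h, hh, hx⟩ := exists_centralizer_eq_of_sup_center_eq_top hH x
      exact ⟨⟨h, hh⟩, by rw [hx, ← centralizer_subgroupOf_singleton]⟩
    · rintro ⟨x, rfl⟩
      exact ⟨_, ⟨x, rfl⟩, centralizer_subgroupOf_singleton x⟩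
  have hinj : Set.InjOn (fun K : Subgroup G => K.subgroupOf H) S := by
    rintro _ ⟨x₁, rfl⟩ _ ⟨x₂, rfl⟩ h
    exact eq_of_inf_eq_of_sup_eq_top hH (center_le_centralizer _) (center_le_centralizer _)
      (subgroupOf_inj.mp h)
  rw [numCent, numCent, ← himage, hinj.ncard_image]

theorem stmt_18_general (G : Type*) [Group G]
    (h2 : commutator (G ⧸ Subgroup.center G) = ⊤) :
    numCent G = numCent (commutator G) :=
  numCent_eq_of_sup_center_eq_top _ (commutator_sup_eq_top_of_commutator_quotient_eq_top _ h2)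

theorem stmt_18 (G : Type*) [Group G] [Finite G]
    (h1 : commutator G ⊓ Subgroup.center G = ⊥)
    (h2 : commutator (G ⧸ Subgroup.center G) = ⊤) :
    numCent G = numCent (commutator G) :=
  stmt_18_general G h2
end
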